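/- arXiv:2312.10019 — 5 statements merged into one kernel-verified Lean document; each statement's English description precedes it below -/
import Mathlib

section
/- Let μ be a probability measure on ℝⁿ × Bool that is linearly separable with margin d ≥ 0 via (w, b) and whose label marginal is uniform (each of the two classes has probability 1/2). Let I(X;Y) denote the true mutual information between input and label, i.e., the Kullback–Leibler divergence of μ with respect to the product of its two marginal distributions, and define the linear-probing MI estimate Î = log 2 − E_{(x,y)∼μ}[−log P̂(y|x)], where P̂ is the softmax predicted probability of the paper's linear probe. Then 0 ≤ I(X;Y) − Î < e^{−d}; in particular, the MI estimation error satisfies |I(X;Y) − Î| < e^{−d}. -/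
open MeasureTheory
open scoped BigOperators ENNReal Classical

/-- Kullback–Leibler divergence between two measures (as in Mathlib's later
`InformationTheory.KullbackLeibler`): `∫ log (dμ/dν) dμ` when `μ ≪ ν` and the
log-likelihood ratio is integrable, and `⊤` otherwise. -/
noncomputable def klDiv {Ω : Type*} [MeasurableSpace Ω] (μ ν : Measure Ω) : EReal :=
  if μ ≪ ν ∧ Integrable (llr μ ν) μ then ((∫ x, llr μ ν x ∂μ : ℝ) : EReal) else ⊤

/-- Logits of the paper's linear probe for binary classification:
class 0 (`false`) gets `w·x + b`, class 1 (`true`) gets `-(w·x + b) - d`. -/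
noncomputable def probeLogit {n : ℕ} (w : Fin n → ℝ) (b d : ℝ) (x : Fin n → ℝ) : Bool → ℝ
  | false => (∑ i, w i * x i) + b
  | true => -((∑ i, w i * x i) + b) - d

/-- Softmax predicted probability `P̂(y|x)` of the paper's linear probe. -/
noncomputable def probePred {n : ℕ} (w : Fin n → ℝ) (b d : ℝ) (x : Fin n → ℝ) (y : Bool) : ℝ :=
  Real.exp (probeLogit w b d x y) /
    (Real.exp (probeLogit w b d x false) + Real.exp (probeLogit w b d x true))

/-! Separability with margin `d ≥ 0` makes the label almost surely a measurable function `g` of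
the input, so `μ` is the push-forward of its input marginal under `x ↦ (x, g x)`. With uniform
labels this is the product of the marginals with density `2 · 1[y = g x]`, hence `I(X;Y) = log 2`
and `I - Î` is the expected cross-entropy of the probe. Pointwise that loss is `log (1 + e^z)` with
`z = ℓ_{¬y} - ℓ_y < -d`, which lies in `[0, e^z) ⊆ [0, e^{-d})`. -/

open MeasureTheory Real

section Graph

variable {α β : Type*} [MeasurableSpace α] [MeasurableSpace β]

lemma map_fst_map_graph_of_ae_snd_eq {μ : Measure (α × β)} {g : α → β} (hg : Measurable g)
    (h : ∀ᵐ p ∂μ, p.2 = g p.1) : (μ.map Prod.fst).map (fun x ↦ (x, g x)) = μ := by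
  rw [Measure.map_map (g := fun x ↦ (x, g x)) (measurable_id.prodMk hg) measurable_fst]
  conv_rhs => rw [← Measure.map_id (μ := μ)]
  exact Measure.map_congr (h.mono fun p hp ↦ Prod.ext rfl hp.symm)

variable [Fintype β] [MeasurableSingletonClass β]

lemma measurable_ite_snd_eq {g : α → β} (hg : Measurable g) (c : ℝ≥0∞) :
    Measurable fun p : α × β ↦ if p.2 = g p.1 then c else 0 :=
  Measurable.ite (measurableSet_eq_fun measurable_snd (hg.comp measurable_fst))
    measurable_const measurable_const

lemma prod_withDensity_graph_eq_map {ρ : Measure α} [SFinite ρ] {ν : Measure β}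
    (hν : ∀ y, ν {y} = (Fintype.card β : ℝ≥0∞)⁻¹) {g : α → β} (hg : Measurable g) :
    (ρ.prod ν).withDensity (fun p ↦ if p.2 = g p.1 then (Fintype.card β : ℝ≥0∞) else 0) =
      ρ.map (fun x ↦ (x, g x)) := by
  have hgraph : Measurable fun x ↦ (x, g x) := measurable_id.prodMk hg
  ext E hE
  rw [withDensity_apply _ hE, ← lintegral_indicator hE,
    lintegral_prod _ ((measurable_ite_snd_eq hg _).indicator hE).aemeasurable, Measure.map_apply hgraph hE,
    ← lintegral_indicator_one (hgraph hE)]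
  refine lintegral_congr fun x ↦ ?_
  have : Nonempty β := ⟨g x⟩
  rw [lintegral_fintype, Finset.sum_eq_single (g x) (fun y _ hy ↦ by simp [hy]) (by simp)]
  by_cases hx : (x, g x) ∈ E <;>
    simp [hx, hν, ENNReal.mul_inv_cancel, Fintype.card_ne_zero]

end Graph

lemma klDiv_withDensity_of_ae_eq_const {Ω : Type*} [MeasurableSpace Ω] {μ ν : Measure Ω}
    [SigmaFinite ν] [IsProbabilityMeasure μ] {f : Ω → ℝ≥0∞} (hf : Measurable f)
    (hμ : μ = ν.withDensity f) {c : ℝ≥0∞} (hc : ∀ᵐ x ∂μ, f x = c) :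
    klDiv μ ν = (log c.toReal : ℝ) := by
  have hac : μ ≪ ν := hμ ▸ withDensity_absolutelyContinuous ν f
  have hllr : llr μ ν =ᵐ[μ] fun _ ↦ log c.toReal := by
    have hrn : μ.rnDeriv ν =ᵐ[μ] f := hac.ae_eq (hμ ▸ Measure.rnDeriv_withDensity ν hf)
    filter_upwards [hrn, hc] with x hx hxc
    simp only [llr_def, hx, hxc]
  rw [klDiv, if_pos ⟨hac, (integrable_const _).congr hllr.symm⟩, integral_congr_ae hllr]
  simp

theorem klDiv_self_prod_marginals_of_ae_snd_eq {α β : Type*} [MeasurableSpace α]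
    [MeasurableSpace β] [Fintype β] [MeasurableSingletonClass β] {μ : Measure (α × β)}
    [IsProbabilityMeasure μ] {g : α → β} (hg : Measurable g) (h : ∀ᵐ p ∂μ, p.2 = g p.1)
    (hunif : ∀ y, μ.map Prod.snd {y} = (Fintype.card β : ℝ≥0∞)⁻¹) :
    klDiv μ ((μ.map Prod.fst).prod (μ.map Prod.snd)) = (log (Fintype.card β) : ℝ) := by
  have : IsProbabilityMeasure (μ.map Prod.fst) :=
    Measure.isProbabilityMeasure_map measurable_fst.aemeasurable
  have : IsProbabilityMeasure (μ.map Prod.snd) :=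
    Measure.isProbabilityMeasure_map measurable_snd.aemeasurable
  refine klDiv_withDensity_of_ae_eq_const (measurable_ite_snd_eq hg _)
    (by rw [prod_withDensity_graph_eq_map hunif hg, map_fst_map_graph_of_ae_snd_eq hg h])
    (h.mono fun p hp ↦ if_pos hp) |>.trans (by simp)

lemma integral_mem_Ico_of_ae_mem_Ico {Ω : Type*} [MeasurableSpace Ω] {μ : Measure Ω}
    [IsProbabilityMeasure μ] {f : Ω → ℝ} (hf : AEMeasurable f μ) {a c : ℝ}
    (h : ∀ᵐ x ∂μ, f x ∈ Set.Ico a c) : ∫ x, f x ∂μ ∈ Set.Ico a c := by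
  have hint : Integrable f μ :=
    Integrable.of_mem_Icc a c hf (h.mono fun x hx ↦ Set.Ico_subset_Icc_self hx)
  have hgap : 0 < ∫ x, (c - f x) ∂μ := by
    have hpos : ∀ᵐ x ∂μ, 0 < c - f x := h.mono fun x hx ↦ sub_pos.mpr hx.2
    rw [integral_pos_iff_support_of_nonneg_ae (hpos.mono fun x hx ↦ hx.le)
      ((integrable_const c).sub hint)]
    have hsupp : Function.support (fun x ↦ c - f x) =ᵐ[μ] Set.univ :=
      ae_eq_univ.mpr (mem_ae_iff.mp (hpos.mono fun x hx ↦ hx.ne'))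
    simp [measure_congr hsupp]
  rw [integral_sub (integrable_const c) hint] at hgap
  refine ⟨?_, by simpa using hgap⟩
  simpa using integral_mono_ae (integrable_const a) hint (h.mono fun x hx ↦ hx.1)

lemma neg_log_exp_div_exp_add_exp (a c : ℝ) :
    -log (exp a / (exp a + exp c)) = log (1 + exp (c - a)) := by
  rw [← log_inv, inv_div, add_div, div_self (exp_ne_zero a), ← exp_sub]

lemma log_one_add_exp_mem_Ico {z d : ℝ} (hz : z < -d) :
    log (1 + exp z) ∈ Set.Ico 0 (exp (-d)) := by
  have hexp := exp_pos z
  refine ⟨log_nonneg (by linarith), ?_⟩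
  calc log (1 + exp z) < 1 + exp z - 1 := log_lt_sub_one_of_pos (by linarith) (by linarith)
    _ = exp z := by ring
    _ < exp (-d) := exp_lt_exp.mpr hz

section Probe

variable {n : ℕ} (w : Fin n → ℝ) (b d : ℝ)

lemma neg_log_probePred (x : Fin n → ℝ) (y : Bool) :
    -log (probePred w b d x y) =
      log (1 + exp (probeLogit w b d x (!y) - probeLogit w b d x y)) := by
  cases y
  · exact neg_log_exp_div_exp_add_exp _ _
  · rw [probePred, add_comm]
    exact neg_log_exp_div_exp_add_exp _ _

lemma probeLogit_not_sub_lt {x : Fin n → ℝ} {y : Bool}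
    (hsep : (y = false → 0 < (∑ i, w i * x i) + b) ∧ (y = true → (∑ i, w i * x i) + b < -d)) :
    probeLogit w b d x (!y) - probeLogit w b d x y < -d := by
  cases y
  · simp only [probeLogit, Bool.not_false]
    linarith [hsep.1 rfl]
  · simp only [probeLogit, Bool.not_true]
    linarith [hsep.2 rfl]

lemma measurable_neg_log_probePred :
    Measurable fun p : (Fin n → ℝ) × Bool ↦ -log (probePred w b d p.1 p.2) := by
  refine measurable_from_prod_countable_left fun y ↦ ?_
  cases y <;> simp only [probePred, probeLogit] <;> fun_prop

end Probe

lemma measure_bool_singleton_eq_inv_two {ν : Measure Bool} [IsProbabilityMeasure ν]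
    (h : ν {false} = 1 / 2) (y : Bool) : ν {y} = 2⁻¹ := by
  cases y
  · simpa using h
  · rw [← Bool.not_false, ← Bool.compl_singleton,
      prob_compl_eq_one_sub (measurableSet_singleton _), h, one_div, ENNReal.one_sub_inv_two]

theorem stmt_0 {n : ℕ} (μ : Measure ((Fin n → ℝ) × Bool)) [IsProbabilityMeasure μ]
    (w : Fin n → ℝ) (b d : ℝ) (hd : 0 ≤ d)
    -- linear separability with margin `d` via `(w, b)`
    (hsep : ∀ᵐ p ∂μ, (p.2 = false → 0 < (∑ i, w i * p.1 i) + b) ∧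
      (p.2 = true → (∑ i, w i * p.1 i) + b < -d))
    -- the label marginal is uniform: each class has probability 1/2
    (hbal : μ.map Prod.snd {false} = 1/2)
    -- true mutual information: KL divergence of `μ` w.r.t. the product of its marginals
    (I : ℝ) (hI : (I : EReal) = klDiv μ ((μ.map Prod.fst).prod (μ.map Prod.snd)))
    -- linear-probing MI estimate: `log 2` minus the expected cross-entropy of the probe
    (Ihat : ℝ)
    (hIhat : Ihat = Real.log 2 - ∫ p, -Real.log (probePred w b d p.1 p.2) ∂μ) :
    (0 ≤ I - Ihat ∧ I - Ihat < Real.exp (-d)) ∧ |I - Ihat| < Real.exp (-d) := by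
  have hlabel : ∀ᵐ p ∂μ, p.2 = decide ((∑ i, w i * p.1 i) + b < -d) := by
    filter_upwards [hsep] with p hp
    cases hy : p.2
    · rw [eq_comm, decide_eq_false_iff_not, not_lt]
      linarith [hp.1 hy]
    · simpa using hp.2 hy
  have hmeas : Measurable fun x : Fin n → ℝ ↦ decide ((∑ i, w i * x i) + b < -d) :=
    measurable_to_bool <| by
      convert measurableSet_lt (f := fun x : Fin n → ℝ ↦ (∑ i, w i * x i) + b)
        (by fun_prop) (measurable_const (a := -d)) using 1
      ext x
      simp
  have : IsProbabilityMeasure (μ.map Prod.snd) :=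
    Measure.isProbabilityMeasure_map measurable_snd.aemeasurable
  have hI2 : I = log 2 := by
    rw [klDiv_self_prod_marginals_of_ae_snd_eq hmeas hlabel
      (by simpa using measure_bool_singleton_eq_inv_two hbal)] at hI
    exact_mod_cast hI
  have hloss : ∫ p, -log (probePred w b d p.1 p.2) ∂μ ∈ Set.Ico 0 (exp (-d)) :=
    integral_mem_Ico_of_ae_mem_Ico (measurable_neg_log_probePred w b d).aemeasurable <|
      hsep.mono fun p hp ↦ neg_log_probePred w b d p.1 p.2 ▸
        log_one_add_exp_mem_Ico (probeLogit_not_sub_lt w b d hp)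
  have hgap : I - Ihat = ∫ p, -log (probePred w b d p.1 p.2) ∂μ := by
    rw [hI2, hIhat]
    ring
  rw [hgap, abs_of_nonneg hloss.1]
  exact ⟨hloss, hloss.2⟩
end

section
/- Let E be a measurable space, ρ a probability measure on E, f : E → Bool a measurable labeling function with ρ({x : f x = false}) = 1/2, and let μ be the pushforward of ρ under x ↦ (x, f x). Let d ≥ 0 and let T : E × Bool → ℝ be measurable with T(x, f x) = 0 for ρ-almost every x and T(x, ¬(f x)) ≤ −d for ρ-almost every x. Then the MINE (Donsker–Varadhan) estimate Î = ∫ T dμ − log ∫ e^T d(μ₁ ⊗ μ₂), where μ₁ and μ₂ are the two marginals of μ, satisfies log 2 − e^{−d} ≤ Î ≤ log 2; in particular, since the true mutual information equals log 2 in this setting, |I(X;Y) − Î| ≤ e^{−d}. -/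
/-!
On the support of `μ` the probe vanishes, so `∫ T dμ = 0`. The product of the marginals is
`ρ ⊗ ν` with `ν` the uniform law on `Bool`, so by Fubini the partition function
`Z = ∫ e^T d(ρ ⊗ ν)` is the `ρ`-average of `(1 + e^{T(x, ¬f x)}) / 2`, which lies in
`[1/2, (1 + e^{-d}) / 2]`. Hence `Î = -log Z` lies in `[log 2 - log (1 + e^{-d}), log 2]`,
and `log (1 + e^{-d}) ≤ e^{-d}`.
-/

open MeasureTheory Real

section UniformBool

variable {ν : Measure Bool} [IsProbabilityMeasure ν]

lemma measure_true_eq_half_of_measure_false (hν : ν {false} = 1 / 2) : ν {true} = 1 / 2 := by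
  have hcompl : ({true} : Set Bool) = {false}ᶜ := by ext b; cases b <;> simp
  rw [hcompl, measure_compl (measurableSet_singleton false) (measure_ne_top _ _), hν,
    measure_univ]
  exact ENNReal.sub_eq_of_eq_add (by norm_num) (ENNReal.add_halves 1).symm

lemma integral_bool_of_measure_false_eq_half (hν : ν {false} = 1 / 2) (g : Bool → ℝ) :
    ∫ b, g b ∂ν = (g false + g true) / 2 := by
  rw [integral_fintype Integrable.of_finite, Fintype.sum_bool]
  simp only [Measure.real, hν, measure_true_eq_half_of_measure_false hν, smul_eq_mul, one_div,
    ENNReal.toReal_inv, ENNReal.toReal_ofNat]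
  ring

lemma integral_prod_bool_of_measure_false_eq_half {E : Type*} [MeasurableSpace E]
    {ρ : Measure E} [SFinite ρ] (hν : ν {false} = 1 / 2) {g : E × Bool → ℝ}
    (hg : Integrable g (ρ.prod ν)) :
    ∫ p, g p ∂(ρ.prod ν) = ∫ x, (g (x, false) + g (x, true)) / 2 ∂ρ := by
  rw [integral_prod _ hg]
  simp only [integral_bool_of_measure_false_eq_half hν]

end UniformBool

section Graph

variable {E F : Type*} [MeasurableSpace E] [MeasurableSpace F] {ρ : Measure E} {f : E → F}

lemma measurable_graph (hf : Measurable f) : Measurable fun x => (x, f x) :=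
  measurable_id.prodMk hf

lemma map_fst_map_graph (hf : Measurable f) : (ρ.map fun x => (x, f x)).map Prod.fst = ρ := by
  rw [Measure.map_map measurable_fst (measurable_graph hf)]
  exact Measure.map_id

lemma map_snd_map_graph (hf : Measurable f) :
    (ρ.map fun x => (x, f x)).map Prod.snd = ρ.map f := by
  rw [Measure.map_map measurable_snd (measurable_graph hf)]
  rfl

lemma integral_map_graph (hf : Measurable f) {g : E × F → ℝ} (hg : Measurable g) :
    ∫ p, g p ∂(ρ.map fun x => (x, f x)) = ∫ x, g (x, f x) ∂ρ :=
  integral_map (measurable_graph hf).aemeasurable hg.aestronglyMeasurable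

end Graph

lemma exp_false_add_exp_true_eq {g : Bool → ℝ} {b : Bool} (hb : g b = 0) :
    exp (g false) + exp (g true) = 1 + exp (g !b) := by
  cases b <;> simp [hb, add_comm]

lemma exp_le_exp_false_add_exp_true (g : Bool → ℝ) (c : Bool) :
    exp (g c) ≤ exp (g false) + exp (g true) := by
  cases c <;> linarith [exp_pos (g false), exp_pos (g true)]

section Probe

variable {E : Type*} [MeasurableSpace E] {ρ : Measure E} {f : E → Bool} {T : E × Bool → ℝ}
  {d : ℝ}

lemma ae_exp_probe_bounds (hT0 : ∀ᵐ x ∂ρ, T (x, f x) = 0)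
    (hTd : ∀ᵐ x ∂ρ, T (x, !(f x)) ≤ -d) :
    ∀ᵐ x ∂ρ, 1 ≤ exp (T (x, false)) + exp (T (x, true)) ∧
      exp (T (x, false)) + exp (T (x, true)) ≤ 1 + exp (-d) := by
  filter_upwards [hT0, hTd] with x hx0 hxd
  rw [exp_false_add_exp_true_eq (g := fun b => T (x, b)) hx0]
  exact ⟨by linarith [exp_pos (T (x, !f x))], by linarith [exp_le_exp.mpr hxd]⟩

lemma integrable_exp_probe {ν : Measure Bool} [IsFiniteMeasure ρ] [IsFiniteMeasure ν]
    (hT : Measurable T) (hT0 : ∀ᵐ x ∂ρ, T (x, f x) = 0)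
    (hTd : ∀ᵐ x ∂ρ, T (x, !(f x)) ≤ -d) :
    Integrable (fun p => exp (T p)) (ρ.prod ν) := by
  have hbound : ∀ᵐ x ∂ρ, ∀ b, exp (T (x, b)) ≤ 1 + exp (-d) := by
    filter_upwards [ae_exp_probe_bounds hT0 hTd] with x hx b
    exact (exp_le_exp_false_add_exp_true (fun c => T (x, c)) b).trans hx.2
  refine Integrable.mono' (integrable_const (1 + exp (-d)))
    (measurable_exp.comp hT).aestronglyMeasurable ?_
  filter_upwards [Measure.quasiMeasurePreserving_fst.ae hbound] with p hp
  simpa [abs_of_pos (exp_pos _)] using hp p.2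

lemma integral_exp_probe_mem_Icc {ν : Measure Bool} [IsProbabilityMeasure ρ]
    [IsProbabilityMeasure ν] (hν : ν {false} = 1 / 2) (hT : Measurable T)
    (hT0 : ∀ᵐ x ∂ρ, T (x, f x) = 0) (hTd : ∀ᵐ x ∂ρ, T (x, !(f x)) ≤ -d) :
    ∫ p, exp (T p) ∂(ρ.prod ν) ∈ Set.Icc (1 / 2) ((1 + exp (-d)) / 2) := by
  rw [integral_prod_bool_of_measure_false_eq_half hν (integrable_exp_probe hT hT0 hTd)]
  have hint : Integrable (fun x => (exp (T (x, false)) + exp (T (x, true))) / 2) ρ :=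
    ((integrable_exp_probe (ν := ν) hT hT0 hTd).integral_prod_left).congr
      (ae_of_all _ fun x => integral_bool_of_measure_false_eq_half hν _)
  have hbounds := ae_exp_probe_bounds hT0 hTd
  constructor
  · calc (1 : ℝ) / 2 = ∫ _x, (1 : ℝ) / 2 ∂ρ := by simp
      _ ≤ _ := integral_mono_ae (integrable_const _) hint <| by
        filter_upwards [hbounds] with x hx using by linarith [hx.1]
  · calc _ ≤ ∫ _x, (1 + exp (-d)) / 2 ∂ρ := integral_mono_ae hint (integrable_const _) <| by
          filter_upwards [hbounds] with x hx using by linarith [hx.2]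
      _ = (1 + exp (-d)) / 2 := by simp

end Probe

lemma neg_log_mem_Icc_of_mem_Icc {Z d : ℝ} (hZ : Z ∈ Set.Icc (1 / 2) ((1 + exp (-d)) / 2)) :
    -log Z ∈ Set.Icc (log 2 - exp (-d)) (log 2) := by
  have hZpos : 0 < Z := by linarith [hZ.1]
  have hlog_half : log (1 / 2 : ℝ) = -log 2 := by rw [one_div, log_inv]
  have hlog_upper : log ((1 + exp (-d)) / 2) = log (1 + exp (-d)) - log 2 :=
    log_div (by positivity) two_ne_zero
  have hlog_one_add : log (1 + exp (-d)) ≤ exp (-d) := by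
    linarith [log_le_sub_one_of_pos (x := 1 + exp (-d)) (by positivity)]
  constructor
  · linarith [log_le_log hZpos hZ.2]
  · linarith [log_le_log (by norm_num) hZ.1]

theorem stmt_1_general {E : Type*} [MeasurableSpace E] (ρ : Measure E) [IsProbabilityMeasure ρ]
    (f : E → Bool) (hf : Measurable f)
    -- balanced labels
    (hbal : ρ {x | f x = false} = 1/2)
    (d : ℝ)
    -- the probe
    (T : E × Bool → ℝ) (hT : Measurable T)
    (hT0 : ∀ᵐ x ∂ρ, T (x, f x) = 0)
    (hTd : ∀ᵐ x ∂ρ, T (x, !(f x)) ≤ -d)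
    -- the joint distribution, pushforward of `ρ` under `x ↦ (x, f x)`
    (μ : Measure (E × Bool)) (hμ : μ = ρ.map (fun x => (x, f x)))
    -- the MINE (Donsker–Varadhan) estimate
    (Ihat : ℝ)
    (hIhat : Ihat = (∫ p, T p ∂μ) -
      Real.log (∫ p, Real.exp (T p) ∂((μ.map Prod.fst).prod (μ.map Prod.snd)))) :
    (Real.log 2 - Real.exp (-d) ≤ Ihat ∧ Ihat ≤ Real.log 2) ∧
      -- in particular, since the true mutual information is `log 2` in this setting:
      |Real.log 2 - Ihat| ≤ Real.exp (-d) := by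
  have : IsProbabilityMeasure (ρ.map f) := Measure.isProbabilityMeasure_map hf.aemeasurable
  have hν : ρ.map f {false} = 1 / 2 := by
    rw [Measure.map_apply hf (measurableSet_singleton false)]
    exact hbal
  have hjoint : ∫ p, T p ∂μ = 0 := by
    rw [hμ, integral_map_graph hf hT]
    exact integral_eq_zero_of_ae hT0
  rw [hjoint, hμ, map_fst_map_graph hf, map_snd_map_graph hf, zero_sub] at hIhat
  have hIcc := neg_log_mem_Icc_of_mem_Icc (integral_exp_probe_mem_Icc hν hT hT0 hTd)
  rw [← hIhat] at hIcc
  refine ⟨hIcc, abs_le.mpr ⟨?_, ?_⟩⟩ <;> linarith [hIcc.1, hIcc.2, exp_pos (-d)]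

theorem stmt_1 {E : Type*} [MeasurableSpace E] (ρ : Measure E) [IsProbabilityMeasure ρ]
    (f : E → Bool) (hf : Measurable f)
    -- balanced labels
    (hbal : ρ {x | f x = false} = 1/2)
    (d : ℝ) (hd : 0 ≤ d)
    -- the probe
    (T : E × Bool → ℝ) (hT : Measurable T)
    (hT0 : ∀ᵐ x ∂ρ, T (x, f x) = 0)
    (hTd : ∀ᵐ x ∂ρ, T (x, !(f x)) ≤ -d)
    -- the joint distribution, pushforward of `ρ` under `x ↦ (x, f x)`
    (μ : Measure (E × Bool)) (hμ : μ = ρ.map (fun x => (x, f x)))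
    -- the MINE (Donsker–Varadhan) estimate
    (Ihat : ℝ)
    (hIhat : Ihat = (∫ p, T p ∂μ) -
      Real.log (∫ p, Real.exp (T p) ∂((μ.map Prod.fst).prod (μ.map Prod.snd)))) :
    (Real.log 2 - Real.exp (-d) ≤ Ihat ∧ Ihat ≤ Real.log 2) ∧
      -- in particular, since the true mutual information is `log 2` in this setting:
      |Real.log 2 - Ihat| ≤ Real.exp (-d) :=
  stmt_1_general ρ f hf hbal d T hT hT0 hTd μ hμ Ihat hIhat
end

section
/- Let μ and ν be probability measures on a measurable space Ω, let d ≥ 0 and c ∈ ℝ, and let T : Ω → ℝ be measurable with T = c μ-almost everywhere and T ≤ c − d ν-almost everywhere. Then 0 ≤ log(∫ e^T dμ + ∫ e^T dν) − ∫ T dμ ≤ e^{−d}. -/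
/-! Since `T = c` μ-a.e., the two μ-integrals are `e^c` and `c`, while `0 ≤ ∫ e^T dν ≤ e^(c-d)`.
Hence the gap is `log (1 + a e^(-c))` with `a = ∫ e^T dν`, which lies between `0` and
`a e^(-c) ≤ e^(-d)` because `log (1 + x) ≤ x`. -/

open MeasureTheory

namespace Real

theorem log_exp_add_sub_nonneg (c : ℝ) {a : ℝ} (ha : 0 ≤ a) : 0 ≤ log (exp c + a) - c := by
  have := log_le_log (exp_pos c) (le_add_of_nonneg_right ha)
  rw [log_exp] at this
  linarith

theorem log_exp_add_sub_le (c : ℝ) {a : ℝ} (ha : 0 ≤ a) : log (exp c + a) - c ≤ a * exp (-c) := by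
  have hsplit : exp c + a = exp c * (1 + a * exp (-c)) := by
    rw [mul_add, mul_one, mul_left_comm, ← exp_add, add_neg_cancel, exp_zero, mul_one]
  have hpos : 0 < 1 + a * exp (-c) := by positivity
  rw [hsplit, log_mul (exp_ne_zero c) hpos.ne', log_exp, add_sub_cancel_left]
  linarith [log_le_sub_one_of_pos hpos]

end Real

namespace MeasureTheory

variable {Ω : Type*} [MeasurableSpace Ω]

/-- No integrability of `f` is needed: otherwise the integral is the junk value `0`. -/
theorem integral_le_of_nonneg_of_ae_le_const (μ : Measure Ω) [IsProbabilityMeasure μ]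
    {f : Ω → ℝ} {C : ℝ} (hf : 0 ≤ f) (hfC : ∀ᵐ x ∂μ, f x ≤ C) : ∫ x, f x ∂μ ≤ C := by
  simpa using integral_mono_of_nonneg (Filter.Eventually.of_forall hf) (integrable_const C) hfC

theorem integral_comp_of_ae_eq_const (μ : Measure Ω) [IsProbabilityMeasure μ]
    {T : Ω → ℝ} {c : ℝ} (hT : ∀ᵐ x ∂μ, T x = c) (g : ℝ → ℝ) : ∫ x, g (T x) ∂μ = g c := by
  rw [integral_congr_ae (hT.mono fun x hx => congrArg g hx)]
  simp

end MeasureTheory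

theorem stmt_4_general {Ω : Type*} [MeasurableSpace Ω] (μ ν : Measure Ω)
    [IsProbabilityMeasure μ] [IsProbabilityMeasure ν]
    (d c : ℝ) (T : Ω → ℝ)
    (hμ : ∀ᵐ x ∂μ, T x = c) (hν : ∀ᵐ x ∂ν, T x ≤ c - d) :
    0 ≤ Real.log ((∫ x, Real.exp (T x) ∂μ) + ∫ x, Real.exp (T x) ∂ν) - ∫ x, T x ∂μ ∧
      Real.log ((∫ x, Real.exp (T x) ∂μ) + ∫ x, Real.exp (T x) ∂ν) - (∫ x, T x ∂μ) ≤
        Real.exp (-d) := by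
  have hν_nonneg : 0 ≤ ∫ x, Real.exp (T x) ∂ν := integral_nonneg fun x => (Real.exp_pos _).le
  have hν_le : ∫ x, Real.exp (T x) ∂ν ≤ Real.exp (c - d) :=
    integral_le_of_nonneg_of_ae_le_const ν (fun x => (Real.exp_pos _).le)
      (hν.mono fun x hx => Real.exp_le_exp.2 hx)
  have hTμ : ∫ x, T x ∂μ = c := integral_comp_of_ae_eq_const μ hμ id
  rw [hTμ, integral_comp_of_ae_eq_const μ hμ Real.exp]
  refine ⟨Real.log_exp_add_sub_nonneg c hν_nonneg, (Real.log_exp_add_sub_le c hν_nonneg).trans ?_⟩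
  calc (∫ x, Real.exp (T x) ∂ν) * Real.exp (-c) ≤ Real.exp (c - d) * Real.exp (-c) := by gcongr
    _ = Real.exp (-d) := by rw [← Real.exp_add]; ring_nf

theorem stmt_4 {Ω : Type*} [MeasurableSpace Ω] (μ ν : Measure Ω)
    [IsProbabilityMeasure μ] [IsProbabilityMeasure ν]
    (d c : ℝ) (hd : 0 ≤ d) (T : Ω → ℝ) (hT : Measurable T)
    (hμ : ∀ᵐ x ∂μ, T x = c) (hν : ∀ᵐ x ∂ν, T x ≤ c - d) :
    0 ≤ Real.log ((∫ x, Real.exp (T x) ∂μ) + ∫ x, Real.exp (T x) ∂ν) - ∫ x, T x ∂μ ∧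
      Real.log ((∫ x, Real.exp (T x) ∂μ) + ∫ x, Real.exp (T x) ∂ν) - (∫ x, T x ∂μ) ≤
        Real.exp (-d) :=
  stmt_4_general μ ν d c T hμ hν
end

section
/- Let E be a measurable space, S a finite set (of labels), ρ a probability measure on E, and f : E → S a measurable labeling function. Let μ be the pushforward of ρ under x ↦ (x, f x). Then the Kullback–Leibler divergence of μ with respect to the product of its two marginals equals the Shannon entropy of the label marginal, −∑_{s∈S} ρ(f⁻¹{s}) · log ρ(f⁻¹{s}) (with the convention 0 · log 0 = 0); that is, when the label is fully determined by the input, I(X; Y) = H(Y). -/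
open MeasureTheory
open scoped ENNReal Classical BigOperators

/-!
The joint law `μ` is carried by the graph of `f`, and its density with respect to
`ρ ⊗ f₊ρ` is `(x, s) ↦ 𝟙[f x = s] / ρ (f ⁻¹' {s})`: integrating over `s` against `f₊ρ`
leaves exactly the indicator of the graph. So `log (dμ / d(ρ ⊗ f₊ρ))` equals
`-log ρ (f ⁻¹' {f x})` almost surely, and its integral is the entropy of `f₊ρ`.
-/

section GraphMeasure

variable {E S : Type*} [MeasurableSpace E] [MeasurableSpace S] {ρ : Measure E} {f : E → S}

noncomputable def graphDensity (ρ : Measure E) (f : E → S) : E × S → ℝ≥0∞ :=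
  {z | f z.1 = z.2}.indicator fun z => (ρ.map f {z.2})⁻¹

lemma measurable_graphDensity [Countable S] [MeasurableSingletonClass S] (hf : Measurable f) :
    Measurable (graphDensity ρ f) :=
  ((measurable_of_countable fun s => (ρ.map f {s})⁻¹).comp measurable_snd).indicator
    (measurableSet_eq_fun (hf.comp measurable_fst) measurable_snd)

lemma ae_map_singleton_ne_zero [Countable S] (hf : Measurable f) :
    ∀ᵐ x ∂ρ, ρ.map f {f x} ≠ 0 :=
  ae_of_ae_map hf.aemeasurable (ae_iff_of_countable.2 fun _ h => h)

lemma lintegral_indicator_graphDensity [Countable S] [MeasurableSingletonClass S]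
    [IsFiniteMeasure ρ] {B : Set (E × S)} {x : E} (hx : ρ.map f {f x} ≠ 0) :
    ∫⁻ s, B.indicator (graphDensity ρ f) (x, s) ∂ρ.map f = B.indicator 1 (x, f x) := by
  rw [lintegral_countable', tsum_eq_single (f x)]
  · by_cases hB : (x, f x) ∈ B
    · simp [hB, graphDensity, ENNReal.inv_mul_cancel hx (measure_ne_top _ _)]
    · simp [hB]
  · intro s hs
    simp [graphDensity, Set.indicator_apply, Ne.symm hs]

theorem map_prodMk_eq_withDensity [Countable S] [MeasurableSingletonClass S]
    [IsFiniteMeasure ρ] (hf : Measurable f) :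
    ρ.map (fun x => (x, f x)) = (ρ.prod (ρ.map f)).withDensity (graphDensity ρ f) := by
  have he : Measurable fun x => (x, f x) := measurable_id.prodMk hf
  ext B hB
  rw [withDensity_apply _ hB, ← lintegral_indicator hB,
    lintegral_prod _ ((measurable_graphDensity hf).indicator hB).aemeasurable,
    lintegral_congr_ae ((ae_map_singleton_ne_zero hf).mono
      fun x hx => lintegral_indicator_graphDensity hx),
    Measure.map_apply he hB]
  exact (lintegral_indicator_one (he hB)).symm

lemma map_prodMk_absolutelyContinuous [Countable S] [MeasurableSingletonClass S]
    [IsFiniteMeasure ρ] (hf : Measurable f) :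
    ρ.map (fun x => (x, f x)) ≪ ρ.prod (ρ.map f) := by
  rw [map_prodMk_eq_withDensity hf]; exact withDensity_absolutelyContinuous _ _

lemma llr_map_prodMk_ae_eq [Countable S] [MeasurableSingletonClass S] [IsFiniteMeasure ρ]
    (hf : Measurable f) :
    (fun x => llr (ρ.map fun x => (x, f x)) (ρ.prod (ρ.map f)) (x, f x))
      =ᵐ[ρ] fun x => -Real.log ((ρ.map f).real {f x}) := by
  have hrn : (ρ.map fun x => (x, f x)).rnDeriv (ρ.prod (ρ.map f))
      =ᵐ[ρ.prod (ρ.map f)] graphDensity ρ f := by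
    rw [map_prodMk_eq_withDensity hf]
    exact Measure.rnDeriv_withDensity _ (measurable_graphDensity hf)
  filter_upwards [ae_of_ae_map (measurable_id.prodMk hf).aemeasurable
    ((map_prodMk_absolutelyContinuous hf).ae_le hrn), ae_map_singleton_ne_zero hf]
    with x hrnx hx
  rw [id] at hrnx
  simp [llr, hrnx, graphDensity, measureReal_def]

theorem klDiv_map_prodMk [Fintype S] [MeasurableSingletonClass S] [IsFiniteMeasure ρ]
    (hf : Measurable f) :
    klDiv (ρ.map fun x => (x, f x)) (ρ.prod (ρ.map f)) =
      ((-∑ s, (ρ.map f).real {s} * Real.log ((ρ.map f).real {s}) : ℝ) : EReal) := by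
  have he : Measurable fun x => (x, f x) := measurable_id.prodMk hf
  set h : S → ℝ := fun s => -Real.log ((ρ.map f).real {s})
  have hh : Measurable h := measurable_of_countable h
  have hllr := llr_map_prodMk_ae_eq (ρ := ρ) hf
  have hint : Integrable (fun x => h (f x)) ρ :=
    (integrable_map_measure hh.aestronglyMeasurable hf.aemeasurable).1 Integrable.of_finite
  have hint_llr : Integrable (llr (ρ.map fun x => (x, f x)) (ρ.prod (ρ.map f)))
      (ρ.map fun x => (x, f x)) :=
    (integrable_map_measure (measurable_llr _ _).aestronglyMeasurable he.aemeasurable).2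
      (hint.congr hllr.symm)
  rw [klDiv, if_pos ⟨map_prodMk_absolutelyContinuous hf, hint_llr⟩,
    integral_map he.aemeasurable (measurable_llr _ _).aestronglyMeasurable,
    integral_congr_ae hllr, ← integral_map hf.aemeasurable hh.aestronglyMeasurable,
    integral_fintype Integrable.of_finite]
  simp [h, Finset.sum_neg_distrib]

end GraphMeasure

theorem stmt_6 {E : Type*} [MeasurableSpace E]
    {S : Type*} [Fintype S] [MeasurableSpace S] [MeasurableSingletonClass S]
    (ρ : Measure E) [IsProbabilityMeasure ρ]
    (f : E → S) (hf : Measurable f)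
    -- the joint distribution, pushforward of `ρ` under `x ↦ (x, f x)`
    (μ : Measure (E × S)) (hμ : μ = ρ.map (fun x => (x, f x))) :
    klDiv μ ((μ.map Prod.fst).prod (μ.map Prod.snd)) =
      ((-∑ s : S, (ρ (f ⁻¹' {s})).toReal * Real.log (ρ (f ⁻¹' {s})).toReal : ℝ) : EReal) := by
  subst hμ
  rw [← Measure.fst, Measure.fst_map_prodMk hf, Measure.map_id', ← Measure.snd,
    Measure.snd_map_prodMk measurable_id', klDiv_map_prodMk hf]
  simp [measureReal_def, Measure.map_apply hf (measurableSet_singleton _)]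
end

section
/- Consider a C-way classification task (C ≥ 2) on a probability space (Ω, μ), with measurable label map Y : Ω → Fin C whose distribution has Shannon entropy H(Y), a measurable function p : Ω → ℝ giving the model's predicted probability of the true label, and a measurable set A ⊆ Ω of correctly predicted samples with accuracy a = μ(A). Suppose ε > 0, that 1/C < p(ω) ≤ 1 for all ω ∈ A, and that ε ≤ p(ω) < 1/2 for all ω ∉ A. Then the MI estimate Î = H(Y) + ∫ log p dμ is bounded by the accuracy as: H(Y) − a·log C + (1 − a)·log ε ≤ Î ≤ H(Y) − (1 − a)·log 2. -/
/-!
`log p` lies in `[-log C, 0]` on the correctly predicted set `A` and in `[log ε, -log 2]` off it.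
So it is bounded, hence integrable, and integrating these bounds over `A` and `Aᶜ`, of masses `a`
and `1 - a`, bounds `∫ log p` on both sides.
-/

open MeasureTheory Set Real

section IntegralBounds

variable {Ω : Type*} [MeasurableSpace Ω] {μ : Measure Ω} {f : Ω → ℝ} {s : Set Ω} {l u : ℝ}

lemma setIntegral_mem_Icc_of_forall_mem_Icc (hs : MeasurableSet s) (hμs : μ s ≠ ⊤)
    (hf : IntegrableOn f s μ) (h : ∀ ω ∈ s, f ω ∈ Icc l u) :
    ∫ ω in s, f ω ∂μ ∈ Icc (l * μ.real s) (u * μ.real s) := by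
  refine ⟨setIntegral_ge_of_const_le_real hs hμs (fun ω hω => (h ω hω).1) hf, ?_⟩
  calc ∫ ω in s, f ω ∂μ ≤ ∫ _ in s, u ∂μ :=
        setIntegral_mono_on hf (integrableOn_const hμs) hs (fun ω hω => (h ω hω).2)
    _ = u * μ.real s := by rw [setIntegral_const, smul_eq_mul, mul_comm]

lemma integral_mem_Icc_of_forall_mem_Icc_of_forall_notMem_Icc [IsFiniteMeasure μ]
    {l' u' : ℝ} (hf : AEStronglyMeasurable f μ) (hs : MeasurableSet s)
    (h_in : ∀ ω ∈ s, f ω ∈ Icc l u) (h_out : ∀ ω ∉ s, f ω ∈ Icc l' u') :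
    ∫ ω, f ω ∂μ ∈ Icc (l * μ.real s + l' * μ.real sᶜ) (u * μ.real s + u' * μ.real sᶜ) := by
  have h_bdd : ∀ ω, f ω ∈ Icc (min l l') (max u u') := by
    intro ω
    by_cases hω : ω ∈ s
    · exact Icc_subset_Icc (min_le_left _ _) (le_max_left _ _) (h_in ω hω)
    · exact Icc_subset_Icc (min_le_right _ _) (le_max_right _ _) (h_out ω hω)
  have hf_int : Integrable f μ :=
    integrable_of_le_of_le hf (ae_of_all _ fun ω => (h_bdd ω).1)
      (ae_of_all _ fun ω => (h_bdd ω).2) (integrable_const _) (integrable_const _)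
  have h_on := setIntegral_mem_Icc_of_forall_mem_Icc hs (measure_ne_top μ s)
    hf_int.integrableOn h_in
  have h_off := setIntegral_mem_Icc_of_forall_mem_Icc hs.compl (measure_ne_top μ sᶜ)
    hf_int.integrableOn h_out
  rw [← integral_add_compl hs hf_int]
  exact ⟨add_le_add h_on.1 h_off.1, add_le_add h_on.2 h_off.2⟩

end IntegralBounds

lemma log_mem_Icc_log_of_mem_Icc {x l u : ℝ} (hl : 0 < l) (hx : x ∈ Icc l u) :
    log x ∈ Icc (log l) (log u) :=
  ⟨log_le_log hl hx.1, log_le_log (hl.trans_le hx.1) hx.2⟩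

theorem stmt_9_general {Ω : Type*} [MeasurableSpace Ω] (μ : Measure Ω) [IsProbabilityMeasure μ]
    (C : ℕ) (hC : 2 ≤ C)
    -- Shannon entropy of the label distribution
    (HY : ℝ)
    -- predicted probability of the true label
    (p : Ω → ℝ) (hp : Measurable p)
    -- set of correctly predicted samples, and the accuracy
    (A : Set Ω) (hA : MeasurableSet A)
    (a : ℝ) (ha : a = (μ A).toReal)
    (ε : ℝ) (hε : 0 < ε)
    (hcorrect : ∀ ω ∈ A, 1 / (C : ℝ) < p ω ∧ p ω ≤ 1)
    (hwrong : ∀ ω ∉ A, ε ≤ p ω ∧ p ω < 1 / 2)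
    -- the MI estimate
    (Ihat : ℝ) (hIhat : Ihat = HY + ∫ ω, Real.log (p ω) ∂μ) :
    HY - a * Real.log C + (1 - a) * Real.log ε ≤ Ihat ∧
      Ihat ≤ HY - (1 - a) * Real.log 2 := by
  have hC_pos : (0 : ℝ) < 1 / C := one_div_pos.2 (Nat.cast_pos.2 (by omega))
  have h_in : ∀ ω ∈ A, log (p ω) ∈ Icc (-log C) 0 := fun ω hω => by
    simpa using log_mem_Icc_log_of_mem_Icc hC_pos ⟨(hcorrect ω hω).1.le, (hcorrect ω hω).2⟩
  have h_out : ∀ ω ∉ A, log (p ω) ∈ Icc (log ε) (-log 2) := fun ω hω => by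
    simpa using log_mem_Icc_log_of_mem_Icc hε ⟨(hwrong ω hω).1, (hwrong ω hω).2.le⟩
  have hμA : μ.real A = a := ha.symm
  have hμAc : μ.real Aᶜ = 1 - a := by rw [probReal_compl_eq_one_sub hA, hμA]
  obtain ⟨h_lower, h_upper⟩ := integral_mem_Icc_of_forall_mem_Icc_of_forall_notMem_Icc
    (μ := μ) (f := fun ω => log (p ω)) (measurable_log.comp hp).aestronglyMeasurable hA
    h_in h_out
  rw [hμA, hμAc] at h_lower h_upper
  constructor <;> linarith

theorem stmt_9 {Ω : Type*} [MeasurableSpace Ω] (μ : Measure Ω) [IsProbabilityMeasure μ]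
    (C : ℕ) (hC : 2 ≤ C)
    (Y : Ω → Fin C) (hY : Measurable Y)
    -- Shannon entropy of the label distribution
    (HY : ℝ) (hHY : HY = -∑ k : Fin C, (μ (Y ⁻¹' {k})).toReal * Real.log (μ (Y ⁻¹' {k})).toReal)
    -- predicted probability of the true label
    (p : Ω → ℝ) (hp : Measurable p)
    -- set of correctly predicted samples, and the accuracy
    (A : Set Ω) (hA : MeasurableSet A)
    (a : ℝ) (ha : a = (μ A).toReal)
    (ε : ℝ) (hε : 0 < ε)
    (hcorrect : ∀ ω ∈ A, 1 / (C : ℝ) < p ω ∧ p ω ≤ 1)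
    (hwrong : ∀ ω ∉ A, ε ≤ p ω ∧ p ω < 1 / 2)
    -- the MI estimate
    (Ihat : ℝ) (hIhat : Ihat = HY + ∫ ω, Real.log (p ω) ∂μ) :
    HY - a * Real.log C + (1 - a) * Real.log ε ≤ Ihat ∧
      Ihat ≤ HY - (1 - a) * Real.log 2 :=
  stmt_9_general μ C hC HY p hp A hA a ha ε hε hcorrect hwrong Ihat hIhat
end
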